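/- arXiv:2601.11975 — 4 statements merged into one kernel-verified Lean document; each statement's English description precedes it below -/
import Mathlib

section
/- For every z ∈ ℂ and w ∈ ℂ \ {0}, the identity exp((z/2)(w + w⁻¹)) = Σ_{n∈ℤ} I_n(z) wⁿ holds, where I_n(z) = (-i)ⁿ J_n(iz) is the modified Bessel function of the first kind of integer order n, and the series converges absolutely. -/
open Complex

/-- Bessel function of the first kind of nonnegative integer order, via its power series. -/
noncomputable def besselJ (n : ℕ) (z : ℂ) : ℂ :=
  ∑' k : ℕ, (-1 : ℂ) ^ k * (z / 2) ^ (n + 2 * k) /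
    ((Nat.factorial k : ℂ) * (Nat.factorial (n + k) : ℂ))

/-- Bessel function of the first kind of integer order, with `J_{-n} = (-1)^n J_n`. -/
noncomputable def besselJZ (n : ℤ) (z : ℂ) : ℂ :=
  if 0 ≤ n then besselJ n.toNat z else (-1 : ℂ) ^ n.natAbs * besselJ n.natAbs z

/-- Modified Bessel function of the first kind of integer order: `I_n(z) = (-i)^n J_n(iz)`. -/
noncomputable def besselI (n : ℤ) (z : ℂ) : ℂ :=
  (-Complex.I) ^ n * besselJZ n (Complex.I * z)

lemma aux1 (m k : ℕ) (x : ℂ) :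
    (-Complex.I) ^ m * ((-1 : ℂ) ^ k * (Complex.I * x) ^ (m + 2 * k)) = x ^ (m + 2 * k) := by
  have hpow : (Complex.I * x) ^ (m + 2 * k)
      = (-1 : ℂ) ^ k * Complex.I ^ m * x ^ (m + 2 * k) := by
    rw [mul_pow, pow_add Complex.I, pow_mul Complex.I, Complex.I_sq]; ring
  rw [hpow]
  have h1 : (-Complex.I) ^ m * Complex.I ^ m = 1 := by
    rw [← mul_pow]; simp [Complex.I_mul_I]
  have h2 : (-1 : ℂ) ^ k * (-1 : ℂ) ^ k = 1 := by rw [← mul_pow]; norm_num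
  calc (-Complex.I) ^ m * ((-1 : ℂ) ^ k * ((-1 : ℂ) ^ k * Complex.I ^ m * x ^ (m + 2 * k)))
      = ((-Complex.I) ^ m * Complex.I ^ m) * ((-1 : ℂ) ^ k * (-1 : ℂ) ^ k)
        * x ^ (m + 2 * k) := by ring
    _ = x ^ (m + 2 * k) := by rw [h1, h2, one_mul, one_mul]

lemma aux2 (m k : ℕ) (x : ℂ) :
    Complex.I ^ m * ((-1 : ℂ) ^ m * ((-1 : ℂ) ^ k * (Complex.I * x) ^ (m + 2 * k)))
      = x ^ (m + 2 * k) := by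
  have hpow : (Complex.I * x) ^ (m + 2 * k)
      = (-1 : ℂ) ^ k * Complex.I ^ m * x ^ (m + 2 * k) := by
    rw [mul_pow, pow_add Complex.I, pow_mul Complex.I, Complex.I_sq]; ring
  rw [hpow]
  have h1 : Complex.I ^ m * ((-1 : ℂ) ^ m * Complex.I ^ m) = 1 := by
    calc Complex.I ^ m * ((-1 : ℂ) ^ m * Complex.I ^ m)
        = (Complex.I * -1 * Complex.I) ^ m := by rw [mul_pow, mul_pow]; ring
      _ = 1 := by norm_num [Complex.I_mul_I]
  have h2 : (-1 : ℂ) ^ k * (-1 : ℂ) ^ k = 1 := by rw [← mul_pow]; norm_num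
  calc Complex.I ^ m * ((-1 : ℂ) ^ m
        * ((-1 : ℂ) ^ k * ((-1 : ℂ) ^ k * Complex.I ^ m * x ^ (m + 2 * k))))
      = (Complex.I ^ m * ((-1 : ℂ) ^ m * Complex.I ^ m)) * ((-1 : ℂ) ^ k * (-1 : ℂ) ^ k)
        * x ^ (m + 2 * k) := by ring
    _ = x ^ (m + 2 * k) := by rw [h1, h2, one_mul, one_mul]

lemma besselI_eq_tsum (n : ℤ) (z : ℂ) :
    besselI n z = ∑' k : ℕ, (z / 2) ^ (n.natAbs + 2 * k) /
      ((Nat.factorial k : ℂ) * (Nat.factorial (n.natAbs + k) : ℂ)) := by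
  unfold besselI besselJZ besselJ
  by_cases h : 0 ≤ n
  · rw [if_pos h]
    obtain ⟨m, rfl⟩ : ∃ m : ℕ, n = (m : ℤ) := ⟨n.toNat, (Int.toNat_of_nonneg h).symm⟩
    rw [Int.toNat_natCast, Int.natAbs_natCast, zpow_natCast, ← tsum_mul_left]
    refine tsum_congr fun k => ?_
    rw [mul_div_assoc Complex.I z 2, ← aux1 m k (z / 2)]
    ring
  · rw [if_neg h]
    obtain ⟨m, rfl⟩ : ∃ m : ℕ, n = -(m : ℤ) := ⟨n.natAbs, by omega⟩
    have hmI : (-Complex.I) ^ (-(m : ℤ)) = Complex.I ^ m := by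
      rw [zpow_neg, zpow_natCast, ← inv_pow,
        show (-Complex.I)⁻¹ = Complex.I from
          inv_eq_of_mul_eq_one_right (by simp [Complex.I_mul_I])]
    simp only [Int.natAbs_neg, Int.natAbs_natCast, hmI]
    rw [← tsum_mul_left, ← tsum_mul_left]
    refine tsum_congr fun k => ?_
    rw [mul_div_assoc Complex.I z 2, ← aux2 m k (z / 2)]
    ring

set_option linter.unnecessarySeqFocus false in
/-- Reindexing equivalence used in the proof of `stmt1`. -/
def eIndex : ℕ × ℕ ≃ ℤ × ℕ where
  toFun p := ((p.1 : ℤ) - p.2, min p.1 p.2)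
  invFun q := (q.2 + q.1.toNat, q.2 + (-q.1).toNat)
  left_inv p := by ext <;> simp <;> try omega
  right_inv q := by ext <;> simp <;> try omega

/-- generating function for the modified Bessel functions,
`exp((z/2)(w + w⁻¹)) = Σ_{n∈ℤ} I_n(z) wⁿ`, with absolute convergence. -/
theorem stmt1 (z w : ℂ) (hw : w ≠ 0) :
    (Complex.exp (z / 2 * (w + w⁻¹)) = ∑' n : ℤ, besselI n z * w ^ n) ∧
      Summable (fun n : ℤ => ‖besselI n z * w ^ n‖) := by
  set a : ℂ := z / 2 * w with ha_def
  set b : ℂ := z / 2 * w⁻¹ with hb_def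
  have ha : Summable fun j : ℕ => ‖a ^ j / (Nat.factorial j : ℂ)‖ := by
    simpa [norm_div, norm_pow] using Real.summable_pow_div_factorial ‖a‖
  have hb : Summable fun j : ℕ => ‖b ^ j / (Nat.factorial j : ℂ)‖ := by
    simpa [norm_div, norm_pow] using Real.summable_pow_div_factorial ‖b‖
  -- the double-indexed family
  set f : ℤ × ℕ → ℂ := fun q => (z / 2) ^ (q.1.natAbs + 2 * q.2) * w ^ q.1 /
    ((Nat.factorial q.2 : ℂ) * (Nat.factorial (q.1.natAbs + q.2) : ℂ)) with hf_def
  set g : ℕ × ℕ → ℂ := fun p => a ^ p.1 / (Nat.factorial p.1 : ℂ)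
    * (b ^ p.2 / (Nat.factorial p.2 : ℂ)) with hg_def
  have hfe : ∀ p : ℕ × ℕ, f (eIndex p) = g p := by
    rintro ⟨j, k⟩
    have h1 : ((j : ℤ) - k).natAbs + 2 * min j k = j + k := by omega
    have h2 : ((j : ℤ) - k).natAbs + min j k = max j k := by omega
    have hwk : (w : ℂ) ^ k ≠ 0 := pow_ne_zero _ hw
    have hfj : ((Nat.factorial j : ℂ)) ≠ 0 := Nat.cast_ne_zero.2 (Nat.factorial_ne_zero j)
    have hfk : ((Nat.factorial k : ℂ)) ≠ 0 := Nat.cast_ne_zero.2 (Nat.factorial_ne_zero k)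
    show (z / 2) ^ (((j : ℤ) - k).natAbs + 2 * min j k) * w ^ ((j : ℤ) - k) /
        ((Nat.factorial (min j k) : ℂ)
          * (Nat.factorial (((j : ℤ) - k).natAbs + min j k) : ℂ)) = g (j, k)
    rw [h1, h2, zpow_sub₀ hw, zpow_natCast, zpow_natCast, hg_def, ha_def, hb_def]
    rcases le_total j k with hjk | hjk
    · rw [min_eq_left hjk, max_eq_right hjk]
      simp only [mul_pow, inv_pow, pow_add, div_eq_mul_inv, mul_inv]
      ring
    · rw [min_eq_right hjk, max_eq_left hjk]
      simp only [mul_pow, inv_pow, pow_add, div_eq_mul_inv, mul_inv]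
      ring
  have hg_norm : Summable fun p : ℕ × ℕ => ‖g p‖ := by
    simpa [hg_def, norm_mul] using
      ha.mul_of_nonneg hb (fun _ => norm_nonneg _) (fun _ => norm_nonneg _)
  have hf_norm : Summable fun q : ℤ × ℕ => ‖f q‖ := by
    refine (Equiv.summable_iff eIndex).mp ?_
    have : ((fun q => ‖f q‖) ∘ eIndex) = fun p => ‖g p‖ := funext fun p => by
      simp [Function.comp, hfe p]
    rw [this]; exact hg_norm
  have hf_sum : Summable f := hf_norm.of_norm
  have key : ∀ n : ℤ, besselI n z * w ^ n = ∑' k : ℕ, f (n, k) := by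
    intro n
    rw [besselI_eq_tsum, ← tsum_mul_right]
    exact tsum_congr fun k => by rw [hf_def]; ring
  have main : Complex.exp (z / 2 * (w + w⁻¹)) = ∑' n : ℤ, besselI n z * w ^ n := by
    have h0 : Complex.exp (z / 2 * (w + w⁻¹))
        = (∑' j : ℕ, a ^ j / (Nat.factorial j : ℂ))
          * ∑' k : ℕ, b ^ k / (Nat.factorial k : ℂ) := by
      rw [mul_add, Complex.exp_add, Complex.exp_eq_exp_ℂ, NormedSpace.exp_eq_tsum_div]
    rw [h0, tsum_mul_tsum_of_summable_norm ha hb]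
    have h1 : ∑' p : ℕ × ℕ, a ^ p.1 / (Nat.factorial p.1 : ℂ)
        * (b ^ p.2 / (Nat.factorial p.2 : ℂ)) = ∑' q : ℤ × ℕ, f q := by
      rw [← Equiv.tsum_eq eIndex f]
      exact tsum_congr fun p => (hfe p).symm
    rw [h1, Summable.tsum_prod' hf_sum fun n => hf_sum.prod_factor n]
    exact tsum_congr fun n => (key n).symm
  refine ⟨main, ?_⟩
  have houter : Summable fun n : ℤ => ∑' k : ℕ, ‖f (n, k)‖ :=
    (hf_norm.hasSum.prod_fiberwise fun n => (hf_norm.prod_factor n).hasSum).summable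
  refine Summable.of_nonneg_of_le (fun n => norm_nonneg _) (fun n => ?_) houter
  rw [key n]
  exact norm_tsum_le_tsum_norm (hf_norm.prod_factor n)
end

section
/- For every ξ = (ξ₁, ξ₂) ∈ ℝ² \ {0} and every κ ∈ ℝ, the pair of vectors η_±(ξ) := -(i/2)ξ ± √(-κ + |ξ|²/4) · ξ^⊥/|ξ| in ℂ² (where ξ^⊥ is the counterclockwise rotation of ξ by π/2) satisfies η₊ + η₋ = -iξ and η₊·η₊ = η₋·η₋ = -κ. Consequently, the plane wave factorizes as e^{-iξ·x} = e^{η₊·x} e^{η₋·x} for all x ∈ ℝ², and each factor e^{η±·x} is a solution of (-Δ - κ)u = 0 on ℝ². -/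
open Complex

/-!
Write `η± = a ξ ± c e` with `a = -i/2`, `e = ξ^⊥/|ξ|` and `c² = -κ + |ξ|²/4`. Since `e·e = 1` and
`ξ·e = 0`, the bilinear square is `η±·η± = a² |ξ|² + c² = -|ξ|²/4 + c² = -κ`, while the `±c e`
terms cancel in `η₊ + η₋ = 2aξ = -iξ`, which gives the factorization of the plane wave. Finally
`e^{η·x}` has Laplacian `(η·η) e^{η·x}`.
-/

theorem cpow_one_div_two_sq (z : ℂ) : (z ^ (1 / 2 : ℂ)) ^ 2 = z := by
  simp [one_div, cpow_ofNat_inv_pow]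

theorem add_mul_sq_add_add_mul_sq_of_orthonormal {R : Type*} [CommRing R]
    (a c ξ₁ ξ₂ e₁ e₂ : R) (he : e₁ ^ 2 + e₂ ^ 2 = 1) (horth : ξ₁ * e₁ + ξ₂ * e₂ = 0) :
    (a * ξ₁ + c * e₁) ^ 2 + (a * ξ₂ + c * e₂) ^ 2 = a ^ 2 * (ξ₁ ^ 2 + ξ₂ ^ 2) + c ^ 2 := by
  linear_combination c ^ 2 * he + 2 * a * c * horth

theorem hasDerivAt_cexp_mul_ofReal_add (a b : ℂ) (x : ℝ) :
    HasDerivAt (fun t : ℝ => exp (a * t + b)) (a * exp (a * x + b)) x := by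
  have hlin : HasDerivAt (fun z : ℂ => a * z + b) a (x : ℂ) := by
    simpa using ((hasDerivAt_id (x : ℂ)).const_mul a).add_const b
  simpa [mul_comm] using hlin.cexp.comp_ofReal

theorem deriv_deriv_cexp_mul_ofReal_add (a b : ℂ) (x : ℝ) :
    deriv (fun s : ℝ => deriv (fun t : ℝ => exp (a * t + b)) s) x = a ^ 2 * exp (a * x + b) := by
  have hderiv : (fun s : ℝ => deriv (fun t : ℝ => exp (a * t + b)) s)
      = fun s : ℝ => a * exp (a * s + b) :=
    funext fun s => (hasDerivAt_cexp_mul_ofReal_add a b s).deriv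
  rw [hderiv, ((hasDerivAt_cexp_mul_ofReal_add a b x).const_mul a).deriv]
  ring

theorem laplacian_cexp_dot (η : ℂ × ℂ) (x₁ x₂ : ℝ) :
    deriv (fun s : ℝ => deriv (fun t : ℝ => exp (η.1 * t + η.2 * x₂)) s) x₁ +
        deriv (fun s : ℝ => deriv (fun t : ℝ => exp (η.1 * x₁ + η.2 * t)) s) x₂ =
      (η.1 ^ 2 + η.2 ^ 2) * exp (η.1 * x₁ + η.2 * x₂) := by
  simp_rw [add_comm (η.1 * (x₁ : ℂ))]
  rw [deriv_deriv_cexp_mul_ofReal_add, deriv_deriv_cexp_mul_ofReal_add, add_comm (η.1 * _)]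
  ring

/-- the vectors `η₊, η₋` sum to `-iξ`, have bilinear square `-κ`, factor the
plane wave `e^{-iξ·x} = e^{η₊·x} e^{η₋·x}`, and each factor solves `(-Δ - κ)u = 0` on `ℝ²`. -/
theorem stmt2 (ξ₁ ξ₂ κ : ℝ) (hξ : ¬(ξ₁ = 0 ∧ ξ₂ = 0)) :
    let nξ : ℝ := Real.sqrt (ξ₁ ^ 2 + ξ₂ ^ 2)
    let c : ℂ := ((-κ + (ξ₁ ^ 2 + ξ₂ ^ 2) / 4 : ℝ) : ℂ) ^ (1/2 : ℂ)
    let ηp : ℂ × ℂ := (-(Complex.I / 2) * ξ₁ + c * (-ξ₂ / nξ : ℝ),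
                       -(Complex.I / 2) * ξ₂ + c * (ξ₁ / nξ : ℝ))
    let ηm : ℂ × ℂ := (-(Complex.I / 2) * ξ₁ - c * (-ξ₂ / nξ : ℝ),
                       -(Complex.I / 2) * ξ₂ - c * (ξ₁ / nξ : ℝ))
    (ηp.1 + ηm.1 = -Complex.I * ξ₁ ∧ ηp.2 + ηm.2 = -Complex.I * ξ₂) ∧
    (ηp.1 ^ 2 + ηp.2 ^ 2 = -κ ∧ ηm.1 ^ 2 + ηm.2 ^ 2 = -κ) ∧
    (∀ x₁ x₂ : ℝ, Complex.exp (-(Complex.I * (ξ₁ * x₁ + ξ₂ * x₂))) =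
        Complex.exp (ηp.1 * x₁ + ηp.2 * x₂) * Complex.exp (ηm.1 * x₁ + ηm.2 * x₂)) ∧
    (∀ η : ℂ × ℂ, η = ηp ∨ η = ηm → ∀ x₁ x₂ : ℝ,
        deriv (fun s : ℝ => deriv (fun t : ℝ => Complex.exp (η.1 * t + η.2 * x₂)) s) x₁ +
          deriv (fun s : ℝ => deriv (fun t : ℝ => Complex.exp (η.1 * x₁ + η.2 * t)) s) x₂ =
        -κ * Complex.exp (η.1 * x₁ + η.2 * x₂)) := by
  intro nξ c ηp ηm
  have hpos : 0 < ξ₁ ^ 2 + ξ₂ ^ 2 := by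
    rcases not_and_or.mp hξ with h | h <;> positivity
  have hnξ : nξ ^ 2 = ξ₁ ^ 2 + ξ₂ ^ 2 := Real.sq_sqrt hpos.le
  have hunit : ((-ξ₂ / nξ : ℝ) : ℂ) ^ 2 + ((ξ₁ / nξ : ℝ) : ℂ) ^ 2 = 1 := by
    have hnξ0 : nξ ≠ 0 := (Real.sqrt_pos.mpr hpos).ne'
    exact_mod_cast show (-ξ₂ / nξ) ^ 2 + (ξ₁ / nξ) ^ 2 = 1 by field_simp; linarith
  have horth : (ξ₁ : ℂ) * ((-ξ₂ / nξ : ℝ) : ℂ) + ξ₂ * ((ξ₁ / nξ : ℝ) : ℂ) = 0 := by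
    push_cast; ring
  have hsq : ∀ c' : ℂ, c' ^ 2 = c ^ 2 →
      (-(I / 2) * ξ₁ + c' * (-ξ₂ / nξ : ℝ)) ^ 2 + (-(I / 2) * ξ₂ + c' * (ξ₁ / nξ : ℝ)) ^ 2 = -κ := by
    intro c' hc'
    rw [add_mul_sq_add_add_mul_sq_of_orthonormal _ _ _ _ _ _ hunit horth, hc',
      cpow_one_div_two_sq]
    push_cast
    linear_combination ((ξ₁ : ℂ) ^ 2 + (ξ₂ : ℂ) ^ 2) / 4 * I_sq
  have hηp : ηp.1 ^ 2 + ηp.2 ^ 2 = -κ := hsq c rfl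
  have hηm : ηm.1 ^ 2 + ηm.2 ^ 2 = -κ := by
    simpa only [ηm, sub_eq_add_neg, ← neg_mul] using hsq (-c) (neg_sq c)
  refine ⟨⟨by simp only [ηp, ηm]; ring, by simp only [ηp, ηm]; ring⟩, ⟨hηp, hηm⟩, ?_, ?_⟩
  · intro x₁ x₂
    rw [← exp_add]
    congr 1
    simp only [ηp, ηm]
    ring
  · rintro η (rfl | rfl) x₁ x₂
    · rw [laplacian_cexp_dot, hηp]
    · rw [laplacian_cexp_dot, hηm]
end

section
/- Let κ ≠ 0 and for ℓ ∈ ℤ set φ_ℓ^κ(r) = J_{|ℓ|}(√κ r)/J_{|ℓ|}(√κ) and ψ_ℓ^κ(r) = √κ r (J₁(√κ r)/J₀(√κ r) − J_{|ℓ|+1}(√κ r)/J_{|ℓ|}(√κ r)). With ∂_± = (1/2)e^{±iθ}(∂_r ± (i/r)∂_θ), the function u_ℓ^κ(re^{iθ}) = (φ_ℓ^κ(r)/φ_0^κ(r)) e^{iℓθ}/√(2π) satisfies ∂_± u_ℓ^κ(re^{iθ}) = e^{±iθ} (ψ_ℓ^κ(r) + |ℓ| ∓ ℓ)/(2r) ·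 u_ℓ^κ(re^{iθ}), wherever J₀(√κ r) and J_{|ℓ|}(√κ r) are nonzero and r > 0. -/
/-!
Differentiating the power series of `J_n` term by term (it converges locally uniformly on `ℂ`),
the `k`-th term contributes `n + 2k` times itself to `z J_n'(z)`; the `n` part gives `n J_n(z)`
and the `2k` part, after the index shift `k ↦ k + 1`, gives `-z J_{n+1}(z)`. Hence
`z J_n' = n J_n - z J_{n+1}`, so the radial logarithmic derivative of
`J_{|ℓ|}(√κ r) / J_0(√κ r)` is `(ψ + |ℓ|) / r`, while `∂_θ` multiplies `e^{iℓθ}` by `iℓ`;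
`∂_±` combines the two into `(ψ + |ℓ| ∓ ℓ) / (2r)`.
-/

open Complex

section BesselSeries

open Nat

noncomputable def besselJTerm (n k : ℕ) (z : ℂ) : ℂ :=
  (-1 : ℂ) ^ k * (z / 2) ^ (n + 2 * k) / ((k ! : ℂ) * ((n + k) ! : ℂ))

variable (n : ℕ)

lemma norm_besselJTerm_le (k : ℕ) {z : ℂ} {R : ℝ} (hz : ‖z‖ ≤ R) :
    ‖besselJTerm n k z‖ ≤ (R / 2) ^ n * ((R / 2) ^ 2) ^ k / k ! := by
  have hfact : (k ! : ℝ) ≤ k ! * (n + k) ! :=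
    le_mul_of_one_le_right (by positivity) (by exact_mod_cast (n + k).factorial_pos)
  have hpow : (‖z‖ / 2) ^ (n + 2 * k) ≤ (R / 2) ^ (n + 2 * k) := by gcongr
  simp only [besselJTerm, norm_div, norm_mul, norm_pow, norm_neg, norm_one, one_pow, one_mul,
    Complex.norm_natCast, Complex.norm_ofNat]
  rw [← pow_mul, ← pow_add]
  exact div_le_div₀ ((by positivity : (0:ℝ) ≤ _).trans hpow) hpow (by positivity) hfact

lemma summable_besselJTerm_bound (R : ℝ) :
    Summable fun k : ℕ => (R / 2) ^ n * ((R / 2) ^ 2) ^ k / k ! := by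
  simpa only [mul_div_assoc] using (Real.summable_pow_div_factorial _).mul_left ((R / 2) ^ n)

lemma summable_besselJTerm (z : ℂ) : Summable fun k => besselJTerm n k z :=
  .of_norm_bounded (summable_besselJTerm_bound n ‖z‖) fun k => norm_besselJTerm_le n k le_rfl

lemma hasSum_besselJTerm (z : ℂ) : HasSum (fun k => besselJTerm n k z) (besselJ n z) :=
  (summable_besselJTerm n z).hasSum

lemma differentiable_besselJTerm (k : ℕ) : Differentiable ℂ (besselJTerm n k) := by
  unfold besselJTerm
  fun_prop

lemma differentiable_besselJ : Differentiable ℂ (besselJ n) := fun z =>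
  (differentiableOn_tsum_of_summable_norm (summable_besselJTerm_bound n (‖z‖ + 1))
    (fun k => (differentiable_besselJTerm n k).differentiableOn) Metric.isOpen_ball
    (fun k _ hw => norm_besselJTerm_le n k (mem_ball_zero_iff.1 hw).le)).differentiableAt
    (Metric.isOpen_ball.mem_nhds (mem_ball_zero_iff.2 (lt_add_one _)))

lemma hasSum_deriv_besselJTerm (z : ℂ) :
    HasSum (fun k => deriv (besselJTerm n k) z) (deriv (besselJ n) z) :=
  hasSum_deriv_of_summable_norm (summable_besselJTerm_bound n (‖z‖ + 1))
    (fun k => (differentiable_besselJTerm n k).differentiableOn) Metric.isOpen_ball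
    (fun k _ hw => norm_besselJTerm_le n k (mem_ball_zero_iff.1 hw).le)
    (mem_ball_zero_iff.2 (lt_add_one _))

lemma mul_deriv_besselJTerm (k : ℕ) (z : ℂ) :
    z * deriv (besselJTerm n k) z = (n + 2 * k : ℕ) * besselJTerm n k z := by
  have h : HasDerivAt (besselJTerm n k) ((-1) ^ k *
      ((n + 2 * k : ℕ) * (z / 2) ^ (n + 2 * k - 1) * (1 / 2)) / (k ! * (n + k) !)) z :=
    ((((hasDerivAt_id z).div_const 2).pow _).const_mul _).div_const _
  rw [h.deriv, besselJTerm]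
  rcases Nat.eq_zero_or_pos (n + 2 * k) with hm | hm
  · simp [hm]
  · rw [← mul_pow_sub_one hm.ne' (z / 2)]
    ring

lemma succ_mul_besselJTerm_succ (k : ℕ) (z : ℂ) :
    2 * (k + 1 : ℕ) * besselJTerm n (k + 1) z = -z * besselJTerm (n + 1) k z := by
  simp only [besselJTerm]
  rw [show n + 2 * (k + 1) = n + 1 + 2 * k + 1 by ring, pow_succ,
    show n + (k + 1) = n + 1 + k by ring, factorial_succ, pow_succ]
  have hk : (k ! : ℂ) ≠ 0 := cast_ne_zero.2 (factorial_ne_zero k)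
  have hk1 : (k + 1 : ℂ) ≠ 0 := cast_add_one_ne_zero k
  push_cast
  field_simp

theorem mul_deriv_besselJ (z : ℂ) :
    z * deriv (besselJ n) z = n * besselJ n z - z * besselJ (n + 1) z := by
  have hEuler :
      HasSum (fun k => (n + 2 * k : ℕ) * besselJTerm n k z) (z * deriv (besselJ n) z) := by
    simpa only [mul_deriv_besselJTerm] using (hasSum_deriv_besselJTerm n z).mul_left z
  have hshift : HasSum (fun k => 2 * (k : ℕ) * besselJTerm n k z) (-z * besselJ (n + 1) z) := by
    rw [← hasSum_nat_add_iff' 1]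
    simpa only [succ_mul_besselJTerm_succ, Finset.sum_range_one, CharP.cast_eq_zero, mul_zero,
      zero_mul, sub_zero] using (hasSum_besselJTerm (n + 1) z).mul_left (-z)
  have hsplit := ((hasSum_besselJTerm n z).mul_left (n : ℂ)).add hshift
  have hdegree : (fun k => (n + 2 * k : ℕ) * besselJTerm n k z) =
      fun k => n * besselJTerm n k z + 2 * k * besselJTerm n k z := by
    funext k
    push_cast
    ring
  rw [hdegree] at hEuler
  rw [hEuler.unique hsplit]
  ring

theorem hasDerivAt_besselJ {z : ℂ} (hz : z ≠ 0) :
    HasDerivAt (besselJ n) (n / z * besselJ n z - besselJ (n + 1) z) z := by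
  have hderiv : deriv (besselJ n) z = n / z * besselJ n z - besselJ (n + 1) z := by
    field_simp
    linear_combination mul_deriv_besselJ n z
  exact hderiv ▸ (differentiable_besselJ n z).hasDerivAt

end BesselSeries

theorem hasDerivAt_besselJ_mul_ofReal (n : ℕ) {c : ℂ} {r : ℝ} (hc : c ≠ 0) (hr : r ≠ 0) :
    HasDerivAt (fun s : ℝ => besselJ n (c * s))
      (n / r * besselJ n (c * r) - c * besselJ (n + 1) (c * r)) r := by
  have hcr : c * r ≠ 0 := mul_ne_zero hc (ofReal_ne_zero.2 hr)
  have h : HasDerivAt (fun w : ℂ => besselJ n (c * w)) _ r :=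
    (hasDerivAt_besselJ n hcr).comp (r : ℂ) ((hasDerivAt_id (r : ℂ)).const_mul c)
  convert h.comp_ofReal using 1
  field_simp

theorem hasDerivAt_besselJ_div_besselJ_zero (n : ℕ) {c : ℂ} {r : ℝ} (hc : c ≠ 0) (hr : r ≠ 0)
    (h0 : besselJ 0 (c * r) ≠ 0) (hn : besselJ n (c * r) ≠ 0) :
    HasDerivAt (fun s : ℝ => besselJ n (c * s) / besselJ 0 (c * s))
      ((c * r * (besselJ 1 (c * r) / besselJ 0 (c * r) -
          besselJ (n + 1) (c * r) / besselJ n (c * r)) + n) / r *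
        (besselJ n (c * r) / besselJ 0 (c * r))) r := by
  have hr' : (r : ℂ) ≠ 0 := ofReal_ne_zero.2 hr
  refine ((hasDerivAt_besselJ_mul_ofReal n hc hr).div (hasDerivAt_besselJ_mul_ofReal 0 hc hr)
    h0).congr_deriv ?_
  simp only [CharP.cast_eq_zero, zero_div, zero_mul, zero_sub, zero_add]
  generalize besselJ n (c * r) = a, besselJ 0 (c * r) = b at *
  field_simp
  ring

lemma hasDerivAt_const_mul_cexp_mul_ofReal (a c : ℂ) (θ : ℝ) :
    HasDerivAt (fun s : ℝ => a * exp (c * s)) (c * (a * exp (c * θ))) θ := by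
  have h := ((((hasDerivAt_id θ).ofReal_comp).const_mul c).cexp).const_mul a
  exact h.congr_deriv (by simp only [id, ofReal_one]; ring)

/-- with `φ_ℓ^κ(r) = J_{|ℓ|}(√κ r)/J_{|ℓ|}(√κ)`,
`ψ_ℓ^κ(r) = √κ r (J₁(√κ r)/J₀(√κ r) − J_{|ℓ|+1}(√κ r)/J_{|ℓ|}(√κ r))` and
`u_ℓ^κ(re^{iθ}) = (φ_ℓ^κ(r)/φ₀^κ(r)) e^{iℓθ}/√(2π)`, the Wirtinger-type derivatives
`∂_± = (1/2)e^{±iθ}(∂_r ± (i/r)∂_θ)` satisfy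
`∂_± u_ℓ^κ = e^{±iθ} (ψ_ℓ^κ(r) + |ℓ| ∓ ℓ)/(2r) u_ℓ^κ` wherever `r > 0` and
`J₀(√κ r) ≠ 0`, `J_{|ℓ|}(√κ r) ≠ 0`. -/
theorem stmt11 (κ : ℝ) (hκ : κ ≠ 0) (ℓ : ℤ) (r θ : ℝ) (hr : 0 < r)
    (h0 : besselJ 0 (((κ : ℂ) ^ (1/2 : ℂ)) * (r : ℝ)) ≠ 0)
    (hl : besselJ ℓ.natAbs (((κ : ℂ) ^ (1/2 : ℂ)) * (r : ℝ)) ≠ 0) :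
    let sκ : ℂ := (κ : ℂ) ^ (1/2 : ℂ)
    let φ : ℤ → ℝ → ℂ := fun n ρ => besselJ n.natAbs (sκ * (ρ : ℝ)) / besselJ n.natAbs sκ
    let U : ℝ → ℝ → ℂ := fun ρ ϑ =>
      φ ℓ ρ / φ 0 ρ * Complex.exp (Complex.I * ℓ * ϑ) / (Real.sqrt (2 * Real.pi) : ℝ)
    let ψ : ℂ := sκ * r * (besselJ 1 (sκ * (r : ℝ)) / besselJ 0 (sκ * (r : ℝ)) -
      besselJ (ℓ.natAbs + 1) (sκ * (r : ℝ)) / besselJ ℓ.natAbs (sκ * (r : ℝ)))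
    ((1/2 : ℂ) * Complex.exp (Complex.I * θ) *
        (deriv (fun s : ℝ => U s θ) r + Complex.I / r * deriv (fun s : ℝ => U r s) θ) =
      Complex.exp (Complex.I * θ) * ((ψ + (ℓ.natAbs : ℂ) - ℓ) / (2 * r)) * U r θ) ∧
    ((1/2 : ℂ) * Complex.exp (-(Complex.I * θ)) *
        (deriv (fun s : ℝ => U s θ) r - Complex.I / r * deriv (fun s : ℝ => U r s) θ) =
      Complex.exp (-(Complex.I * θ)) * ((ψ + (ℓ.natAbs : ℂ) + ℓ) / (2 * r)) * U r θ) := by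
  intro sκ φ U ψ
  have hsκ : sκ ≠ 0 := (cpow_ne_zero_iff_of_exponent_ne_zero (by norm_num)).2 (ofReal_ne_zero.2 hκ)
  -- Valid even if `J_{|ℓ|}(√κ)` or `J_0(√κ)` vanishes, as `(a / b) / (c / d) = a * b⁻¹ * c⁻¹ * d`
  -- holds with `0⁻¹ = 0`.
  have hU : U = fun ρ ϑ : ℝ =>
      besselJ 0 sκ / besselJ ℓ.natAbs sκ / (Real.sqrt (2 * Real.pi) : ℝ) *
        (besselJ ℓ.natAbs (sκ * ρ) / besselJ 0 (sκ * ρ)) * exp (I * ℓ * ϑ) := by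
    funext ρ ϑ
    simp only [U, φ, Int.natAbs_zero, div_eq_mul_inv, mul_inv, inv_inv]
    ring
  have hradial : deriv (fun s => U s θ) r = (ψ + ℓ.natAbs) / r * U r θ := by
    rw [hU]
    refine ((((hasDerivAt_besselJ_div_besselJ_zero ℓ.natAbs hsκ hr.ne' h0 hl).const_mul _).mul_const
      _).deriv).trans ?_
    ring
  have hangular : deriv (fun s => U r s) θ = I * ℓ * U r θ := by
    rw [hU]
    exact (hasDerivAt_const_mul_cexp_mul_ofReal _ _ θ).deriv
  rw [hradial, hangular]
  constructor
  · linear_combination (exp (I * θ) * U r θ * ℓ / (2 * r)) * I_sq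
  · linear_combination -(exp (-(I * θ)) * U r θ * ℓ / (2 * r)) * I_sq
end

section
/- Let 𝔻 be the unit disk and γ ∈ L^∞(𝔻) a conductivity. For ξ ∈ ℝ² \ {0}, choose η₁, η₂ ∈ ℂ² with η₁·η₁ = η₂·η₂ = 0 and η₁ + η₂ = -iξ. Suppose w ∈ L^∞(𝔻) satisfies ∫_𝔻 w ∇u_f¹ · ∇u_g¹ dx = ⟨f, Λ_γ g⟩ for all f, g ∈ H^{1/2}(S¹), where u_f¹ is the harmonic extension of f. Then 2η₁·η₂ = -|ξ|² and ℱw(ξ) = -(2/|ξ|²) ⟨e_{η₁}|_{S¹}, Λ_γ (e_{η₂}|_{S¹})⟩, where e_η(x) := e^{η·x}. In particular, such a w (the Born approximation γ_1^B) is unique in L^∞(𝔻). -/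
open Complex MeasureTheory FourierTransform RealInnerProductSpace

/-- `F : ℂ → ℝ² → ℂ` is (globally) harmonic: smooth with vanishing Laplacian. -/
def IsHarmonicFn (F : ℂ → ℂ) : Prop :=
  ContDiff ℝ (⊤ : ℕ∞) F ∧ ∀ z : ℂ,
    fderiv ℝ (fun y => fderiv ℝ F y 1) z 1 +
      fderiv ℝ (fun y => fderiv ℝ F y Complex.I) z Complex.I = 0

/-- The (bilinear) dot product of the real gradients of `F` and `G` at `z`. -/
noncomputable def gradDot (F G : ℂ → ℂ) (z : ℂ) : ℂ :=
  fderiv ℝ F z 1 * fderiv ℝ G z 1 + fderiv ℝ F z Complex.I * fderiv ℝ G z Complex.I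

/-- The exponential solution `e_η(x) = e^{η·x}` for `η ∈ ℂ²`. -/
noncomputable def expSol (η : ℂ × ℂ) (z : ℂ) : ℂ :=
  Complex.exp (η.1 * z.re + η.2 * z.im)

noncomputable def linMap (η : ℂ × ℂ) : ℂ →L[ℝ] ℂ :=
  η.1 • (Complex.ofRealCLM.comp Complex.reCLM) + η.2 • (Complex.ofRealCLM.comp Complex.imCLM)

lemma linMap_apply (η : ℂ × ℂ) (v : ℂ) : linMap η v = η.1 * v.re + η.2 * v.im := by
  simp [linMap, smul_eq_mul]

lemma expSol_eq (η : ℂ × ℂ) : expSol η = fun z => Complex.exp (linMap η z) := by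
  ext z; simp [expSol, linMap_apply]

lemma hasFDerivAt_expSol (η : ℂ × ℂ) (z : ℂ) :
    HasFDerivAt (expSol η) (expSol η z • linMap η) z := by
  rw [expSol_eq]
  have h1 : HasFDerivAt Complex.exp
      (((1 : ℂ →L[ℂ] ℂ).smulRight (Complex.exp (linMap η z))).restrictScalars ℝ) (linMap η z) :=
    ((Complex.hasDerivAt_exp (linMap η z)).hasFDerivAt).restrictScalars ℝ
  have := h1.comp z (linMap η).hasFDerivAt
  refine this.congr_fderiv ?_
  ext v
  simp [expSol_eq, smul_eq_mul, mul_comm]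

lemma fderiv_expSol (η : ℂ × ℂ) (z v : ℂ) :
    fderiv ℝ (expSol η) z v = expSol η z * (η.1 * v.re + η.2 * v.im) := by
  rw [(hasFDerivAt_expSol η z).fderiv]
  simp [linMap_apply, smul_eq_mul]

lemma contDiff_expSol (η : ℂ × ℂ) : ContDiff ℝ (⊤ : ℕ∞) (expSol η) := by
  rw [expSol_eq]
  exact Complex.contDiff_exp.comp (linMap η).contDiff

lemma fderiv2_expSol (η : ℂ × ℂ) (z u v : ℂ) :
    fderiv ℝ (fun y => fderiv ℝ (expSol η) y u) z v =
      expSol η z * (η.1 * u.re + η.2 * u.im) * (η.1 * v.re + η.2 * v.im) := by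
  have h : ∀ y, fderiv ℝ (expSol η) y u = expSol η y * (η.1 * u.re + η.2 * u.im) := fun y =>
    fderiv_expSol η y u
  rw [show (fun y => fderiv ℝ (expSol η) y u) = fun y => expSol η y * (η.1 * u.re + η.2 * u.im) from
    funext h]
  have := ((hasFDerivAt_expSol η z).mul_const (η.1 * u.re + η.2 * u.im)).fderiv
  rw [this]
  simp [linMap_apply, smul_eq_mul]
  ring

lemma isHarmonic_expSol (η : ℂ × ℂ) (hη : η.1 ^ 2 + η.2 ^ 2 = 0) :
    IsHarmonicFn (expSol η) := by
  refine ⟨contDiff_expSol η, fun z => ?_⟩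
  rw [fderiv2_expSol, fderiv2_expSol]
  simp only [Complex.one_re, Complex.one_im, Complex.I_re, Complex.I_im]
  push_cast
  linear_combination expSol η z * hη

lemma gradDot_expSol (η₁ η₂ : ℂ × ℂ) (z : ℂ) :
    gradDot (expSol η₁) (expSol η₂) z =
      (η₁.1 * η₂.1 + η₁.2 * η₂.2) *
        Complex.exp ((η₁.1 + η₂.1) * z.re + (η₁.2 + η₂.2) * z.im) := by
  unfold gradDot
  rw [fderiv_expSol, fderiv_expSol, fderiv_expSol, fderiv_expSol]
  simp only [Complex.one_re, Complex.one_im, Complex.I_re, Complex.I_im]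
  push_cast
  rw [show ((η₁.1 + η₂.1) * z.re + (η₁.2 + η₂.2) * z.im)
      = (η₁.1 * z.re + η₁.2 * z.im) + (η₂.1 * z.re + η₂.2 * z.im) by ring, Complex.exp_add]
  unfold expSol
  ring

noncomputable def reFn : ℂ → ℂ := fun z => (z.re : ℂ)

lemma reFn_eq : reFn = fun z => (Complex.ofRealCLM.comp Complex.reCLM) z := rfl

lemma fderiv_reFn (z v : ℂ) : fderiv ℝ reFn z v = (v.re : ℂ) := by
  rw [reFn_eq, (Complex.ofRealCLM.comp Complex.reCLM).fderiv]
  simp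

lemma isHarmonic_reFn : IsHarmonicFn reFn := by
  constructor
  · rw [reFn_eq]; exact (Complex.ofRealCLM.comp Complex.reCLM).contDiff
  · intro z
    have h1 : (fun y => fderiv ℝ reFn y 1) = fun _ => (1 : ℂ) := by
      ext y; rw [fderiv_reFn]; simp
    have h2 : (fun y => fderiv ℝ reFn y Complex.I) = fun _ => (0 : ℂ) := by
      ext y; rw [fderiv_reFn]; simp
    rw [h1, h2, fderiv_fun_const, fderiv_fun_const]
    simp

lemma gradDot_reFn (z : ℂ) : gradDot reFn reFn z = 1 := by
  simp [gradDot, fderiv_reFn]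

lemma algId (ξ₁ ξ₂ : ℝ) (η₁ η₂ : ℂ × ℂ)
    (h1 : η₁.1 ^ 2 + η₁.2 ^ 2 = 0) (h2 : η₂.1 ^ 2 + η₂.2 ^ 2 = 0)
    (hsum1 : η₁.1 + η₂.1 = -Complex.I * ξ₁) (hsum2 : η₁.2 + η₂.2 = -Complex.I * ξ₂) :
    2 * (η₁.1 * η₂.1 + η₁.2 * η₂.2) = -((ξ₁ ^ 2 + ξ₂ ^ 2 : ℝ) : ℂ) := by
  push_cast
  linear_combination -h1 - h2 + (η₁.1 + η₂.1 - Complex.I * ξ₁) * hsum1 +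
    (η₁.2 + η₂.2 - Complex.I * ξ₂) * hsum2 + ((ξ₁:ℂ)^2 + (ξ₂:ℂ)^2) * Complex.I_sq

lemma keyFormula (pair : (ℂ → ℂ) → (ℂ → ℂ) → ℂ) (w : ℂ → ℂ)
    (hmom : ∀ F G : ℂ → ℂ, IsHarmonicFn F → IsHarmonicFn G →
      ∫ z in Metric.ball (0 : ℂ) 1, w z * gradDot F G z = pair F G)
    (ξ₁ ξ₂ : ℝ) (hξ : ¬(ξ₁ = 0 ∧ ξ₂ = 0)) (η₁ η₂ : ℂ × ℂ)
    (h1 : η₁.1 ^ 2 + η₁.2 ^ 2 = 0) (h2 : η₂.1 ^ 2 + η₂.2 ^ 2 = 0)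
    (hsum1 : η₁.1 + η₂.1 = -Complex.I * ξ₁) (hsum2 : η₁.2 + η₂.2 = -Complex.I * ξ₂) :
    (∫ z in Metric.ball (0 : ℂ) 1,
        Complex.exp (-(Complex.I * (ξ₁ * z.re + ξ₂ * z.im))) * w z) =
      -(2 / ((ξ₁ ^ 2 + ξ₂ ^ 2 : ℝ) : ℂ)) * pair (expSol η₁) (expSol η₂) := by
  set c : ℂ := η₁.1 * η₂.1 + η₁.2 * η₂.2 with hcdef
  have hc : 2 * c = -((ξ₁ ^ 2 + ξ₂ ^ 2 : ℝ) : ℂ) := algId ξ₁ ξ₂ η₁ η₂ h1 h2 hsum1 hsum2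
  have hspos : (0 : ℝ) < ξ₁ ^ 2 + ξ₂ ^ 2 := by
    rcases not_and_or.1 hξ with h | h
    · positivity
    · positivity
  have hs : ((ξ₁ ^ 2 + ξ₂ ^ 2 : ℝ) : ℂ) ≠ 0 := by
    exact_mod_cast Complex.ofReal_ne_zero.2 (ne_of_gt hspos)
  have hcne : c ≠ 0 := by
    intro h0
    rw [h0, mul_zero] at hc
    exact hs (by linear_combination hc)
  have hE : ∀ z : ℂ, gradDot (expSol η₁) (expSol η₂) z =
      c * Complex.exp (-(Complex.I * (ξ₁ * z.re + ξ₂ * z.im))) := by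
    intro z
    rw [gradDot_expSol, hsum1, hsum2]
    congr 1
    ring
  have heq := hmom (expSol η₁) (expSol η₂) (isHarmonic_expSol η₁ h1) (isHarmonic_expSol η₂ h2)
  have hswap : (∫ z in Metric.ball (0 : ℂ) 1, w z * gradDot (expSol η₁) (expSol η₂) z)
      = c * ∫ z in Metric.ball (0 : ℂ) 1,
          Complex.exp (-(Complex.I * (ξ₁ * z.re + ξ₂ * z.im))) * w z := by
    rw [← integral_const_mul]
    refine integral_congr_ae (Filter.Eventually.of_forall fun z => ?_)
    simp only
    rw [hE]
    ring
  rw [hswap] at heq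
  have hs' : (ξ₁:ℂ)^2 + (ξ₂:ℂ)^2 ≠ 0 := by
    intro h; exact hs (by push_cast; linear_combination h)
  rw [show -(2 / ((ξ₁ ^ 2 + ξ₂ ^ 2 : ℝ) : ℂ)) * pair (expSol η₁) (expSol η₂)
      = (-(2 * pair (expSol η₁) (expSol η₂))) / ((ξ₁ ^ 2 + ξ₂ ^ 2 : ℝ) : ℂ) by ring,
    eq_div_iff hs]
  linear_combination (-(2:ℂ)) * heq + (∫ z in Metric.ball (0 : ℂ) 1,
        Complex.exp (-(Complex.I * (ξ₁ * z.re + ξ₂ * z.im))) * w z) * hc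

lemma flipInner : (innerₗ ℂ).flip = innerₗ ℂ := by
  apply LinearMap.ext; intro x; apply LinearMap.ext; intro y
  simp only [LinearMap.flip_apply]
  exact real_inner_comm x y

/-- A smooth compactly supported function, complexified, as a Schwartz map. -/
noncomputable def toSchwartz (ψ : ℂ → ℝ) (hs : ContDiff ℝ ((⊤:ℕ∞):WithTop ℕ∞) ψ)
    (hc : HasCompactSupport ψ) : SchwartzMap ℂ ℂ where
  toFun := fun x => (ψ x : ℂ)
  smooth' := Complex.ofRealCLM.contDiff.comp hs
  decay' := by
    intro k n
    have hsupp : HasCompactSupport (fun x => (ψ x : ℂ)) :=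
      hc.comp_left (g := fun r : ℝ => (r : ℂ)) (by simp)
    have h1 : HasCompactSupport (iteratedFDeriv ℝ n (fun x => (ψ x : ℂ))) :=
      hsupp.iteratedFDeriv n
    have hcont : Continuous (iteratedFDeriv ℝ n (fun x => (ψ x : ℂ))) :=
      (Complex.ofRealCLM.contDiff.comp hs).continuous_iteratedFDeriv
        (by exact_mod_cast le_top)
    have h2 : HasCompactSupport
        (fun x : ℂ => ‖x‖ ^ k * ‖iteratedFDeriv ℝ n (fun x => (ψ x : ℂ)) x‖) := by
      apply HasCompactSupport.mul_left
      exact h1.norm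
    obtain ⟨C, hC⟩ := Continuous.bounded_above_of_compact_support
      (by continuity) h2
    exact ⟨C, fun x => by
      have := hC x
      calc ‖x‖ ^ k * ‖iteratedFDeriv ℝ n (fun x => (ψ x : ℂ)) x‖
          ≤ ‖‖x‖ ^ k * ‖iteratedFDeriv ℝ n (fun x => (ψ x : ℂ)) x‖‖ := le_abs_self _
        _ ≤ C := this⟩

lemma fourierZero_ae_zero {g : ℂ → ℂ} (hgInt : Integrable g)
    (h0 : ∀ v : ℂ, 𝓕 g v = 0) : ∀ᵐ x, g x = 0 := by
  have hmul : ∀ f : ℂ → ℂ, Integrable f → ∫ ξ, (𝓕 f ξ) • g ξ = 0 := by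
    intro f hf
    have := VectorFourier.integral_fourierIntegral_smul_eq_flip (L := innerₗ ℂ)
      Real.continuous_fourierChar continuous_inner hf hgInt
    rw [flipInner] at this
    have h2 : ∀ x : ℂ, VectorFourier.fourierIntegral 𝐞 volume (innerₗ ℂ) g x = 0 := h0
    rw [show (fun ξ => (𝓕 f ξ) • g ξ)
        = fun ξ => (VectorFourier.fourierIntegral 𝐞 volume (innerₗ ℂ) f ξ) • g ξ from rfl] at *
    rw [this]
    simp [h2]
  have hSchwartz : ∀ φ : SchwartzMap ℂ ℂ, ∫ x, φ x • g x = 0 := by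
    intro φ
    set f := (SchwartzMap.fourierTransformCLE ℂ (SchwartzMap ℂ ℂ)).symm φ with hf
    have hφf : ⇑φ = 𝓕 ⇑f := by
      conv_lhs => rw [← (SchwartzMap.fourierTransformCLE ℂ (SchwartzMap ℂ ℂ)).apply_symm_apply φ]
      rfl
    have := hmul ⇑f f.integrable
    rw [← hφf] at this
    exact this
  have htest : ∀ (ψ : ℂ → ℝ), ContDiff ℝ ((⊤:ℕ∞):WithTop ℕ∞) ψ → HasCompactSupport ψ →
      ∫ x, ψ x • g x = 0 := by
    intro ψ hs hc
    have := hSchwartz (toSchwartz ψ hs hc)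
    rw [show (fun x => (toSchwartz ψ hs hc) x • g x) = fun x => ψ x • g x by
      ext x
      show ((ψ x : ℂ)) • g x = ψ x • g x
      rw [smul_eq_mul, ← Complex.real_smul]] at this
    exact this
  exact ae_eq_zero_of_integral_contDiff_smul_eq_zero hgInt.locallyIntegrable
    (fun ψ hs hc => htest ψ hs hc)

/-- if `w ∈ L^∞(𝔻)` represents the DtN pairing of `γ` via
`∫_𝔻 w ∇u_f·∇u_g = ⟨f, Λ_γ g⟩` for harmonic extensions, then for `ξ ≠ 0` and
`η₁, η₂ ∈ ℂ²` with `η_j·η_j = 0`, `η₁+η₂ = -iξ`, one has `2η₁·η₂ = -|ξ|²` and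
`ℱw(ξ) = -(2/|ξ|²)⟨e_{η₁}, Λ_γ e_{η₂}⟩`; in particular such a `w` is unique in `L^∞(𝔻)`. -/
theorem stmt15 (pair : (ℂ → ℂ) → (ℂ → ℂ) → ℂ)
    (w w' : ℂ → ℂ) (hwm : Measurable w) (hw'm : Measurable w')
    (Cw : ℝ) (hwb : ∀ z, ‖w z‖ ≤ Cw) (Cw' : ℝ) (hw'b : ∀ z, ‖w' z‖ ≤ Cw')
    (hmom : ∀ F G : ℂ → ℂ, IsHarmonicFn F → IsHarmonicFn G →
      ∫ z in Metric.ball (0 : ℂ) 1, w z * gradDot F G z = pair F G)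
    (hmom' : ∀ F G : ℂ → ℂ, IsHarmonicFn F → IsHarmonicFn G →
      ∫ z in Metric.ball (0 : ℂ) 1, w' z * gradDot F G z = pair F G)
    (ξ₁ ξ₂ : ℝ) (hξ : ¬(ξ₁ = 0 ∧ ξ₂ = 0)) (η₁ η₂ : ℂ × ℂ)
    (h1 : η₁.1 ^ 2 + η₁.2 ^ 2 = 0) (h2 : η₂.1 ^ 2 + η₂.2 ^ 2 = 0)
    (hsum1 : η₁.1 + η₂.1 = -Complex.I * ξ₁) (hsum2 : η₁.2 + η₂.2 = -Complex.I * ξ₂) :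
    (2 * (η₁.1 * η₂.1 + η₁.2 * η₂.2) = -((ξ₁ ^ 2 + ξ₂ ^ 2 : ℝ) : ℂ)) ∧
    ((∫ z in Metric.ball (0 : ℂ) 1,
        Complex.exp (-(Complex.I * (ξ₁ * z.re + ξ₂ * z.im))) * w z) =
      -(2 / ((ξ₁ ^ 2 + ξ₂ ^ 2 : ℝ) : ℂ)) * pair (expSol η₁) (expSol η₂)) ∧
    w =ᵐ[volume.restrict (Metric.ball (0 : ℂ) 1)] w' := by
  refine ⟨algId ξ₁ ξ₂ η₁ η₂ h1 h2 hsum1 hsum2,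
    keyFormula pair w hmom ξ₁ ξ₂ hξ η₁ η₂ h1 h2 hsum1 hsum2, ?_⟩
  -- uniqueness
  have hball : volume (Metric.ball (0 : ℂ) 1) ≠ ⊤ := measure_ball_lt_top.ne
  have hIntOn : ∀ (u : ℂ → ℂ), Measurable u → ∀ C : ℝ, (∀ z, ‖u z‖ ≤ C) →
      IntegrableOn u (Metric.ball (0 : ℂ) 1) volume := fun u hm C hb =>
    Measure.integrableOn_of_bounded hball hm.aestronglyMeasurable (ae_of_all _ hb)
  set g : ℂ → ℂ := (Metric.ball (0 : ℂ) 1).indicator (fun z => w z - w' z) with hgdef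
  have hgInt : Integrable g :=
    (hIntOn (fun z => w z - w' z) (hwm.sub hw'm) (Cw + Cw')
      (fun z => (norm_sub_le _ _).trans (add_le_add (hwb z) (hw'b z)))).integrable_indicator
      Metric.isOpen_ball.measurableSet
  have h0 : ∀ v : ℂ, 𝓕 g v = 0 := by
    intro v
    rw [Real.fourier_eq]
    have hrw : (fun z : ℂ => 𝐞 (-⟪z, v⟫) • g z) = (Metric.ball (0 : ℂ) 1).indicator
        (fun z => Complex.exp (-(Complex.I *
          ((2 * Real.pi * v.re : ℝ) * z.re + (2 * Real.pi * v.im : ℝ) * z.im))) *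
          (w z - w' z)) := by
      ext z
      by_cases hz : z ∈ Metric.ball (0 : ℂ) 1
      · rw [hgdef]
        rw [Set.indicator_of_mem hz, Set.indicator_of_mem hz, Circle.smul_def,
          Real.fourierChar_apply]
        congr 2
        have hinner : ⟪z, v⟫ = z.re * v.re + z.im * v.im := by
          simp only [Complex.inner, Complex.mul_re, Complex.conj_re, Complex.conj_im]
          ring
        rw [hinner]
        push_cast
        ring
      · simp [hgdef, Set.indicator_of_notMem hz]
    rw [hrw, integral_indicator Metric.isOpen_ball.measurableSet]
    by_cases hv : v = 0
    · subst hv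
      simp only [Complex.zero_re, Complex.zero_im, mul_zero, Complex.ofReal_zero, zero_mul,
        add_zero, neg_zero, Complex.exp_zero, one_mul]
      rw [integral_sub (hIntOn w hwm Cw hwb) (hIntOn w' hw'm Cw' hw'b), sub_eq_zero]
      have e1 := hmom reFn reFn isHarmonic_reFn isHarmonic_reFn
      have e2 := hmom' reFn reFn isHarmonic_reFn isHarmonic_reFn
      simp only [gradDot_reFn, mul_one] at e1 e2
      exact e1.trans e2.symm
    · set ζ₁ : ℝ := 2 * Real.pi * v.re with hζ1
      set ζ₂ : ℝ := 2 * Real.pi * v.im with hζ2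
      have hζ : ¬(ζ₁ = 0 ∧ ζ₂ = 0) := by
        rintro ⟨a, b⟩
        apply hv
        have hπ : (2 * Real.pi) ≠ 0 := by positivity
        have : v.re = 0 := by
          have := mul_eq_zero.1 a
          tauto
        have h2' : v.im = 0 := by
          have := mul_eq_zero.1 b
          tauto
        exact Complex.ext this h2'
      set μ₁ : ℂ × ℂ := (((ζ₂ : ℂ) - Complex.I * ζ₁) / 2, ((-(ζ₁ : ℂ)) - Complex.I * ζ₂) / 2)
        with hμ1
      set μ₂ : ℂ × ℂ := (((-(ζ₂ : ℂ)) - Complex.I * ζ₁) / 2, ((ζ₁ : ℂ) - Complex.I * ζ₂) / 2)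
        with hμ2
      have hh1 : μ₁.1 ^ 2 + μ₁.2 ^ 2 = 0 := by
        rw [hμ1]
        simp only
        linear_combination (((ζ₁:ℂ)^2 + (ζ₂:ℂ)^2) / 4) * Complex.I_sq
      have hh2 : μ₂.1 ^ 2 + μ₂.2 ^ 2 = 0 := by
        rw [hμ2]
        simp only
        linear_combination (((ζ₁:ℂ)^2 + (ζ₂:ℂ)^2) / 4) * Complex.I_sq
      have hhs1 : μ₁.1 + μ₂.1 = -Complex.I * ζ₁ := by rw [hμ1, hμ2]; simp only; ring
      have hhs2 : μ₁.2 + μ₂.2 = -Complex.I * ζ₂ := by rw [hμ1, hμ2]; simp only; ring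
      have k1 := keyFormula pair w hmom ζ₁ ζ₂ hζ μ₁ μ₂ hh1 hh2 hhs1 hhs2
      have k2 := keyFormula pair w' hmom' ζ₁ ζ₂ hζ μ₁ μ₂ hh1 hh2 hhs1 hhs2
      have hEc : Continuous fun z : ℂ =>
          Complex.exp (-(Complex.I * ((ζ₁ : ℝ) * z.re + (ζ₂ : ℝ) * z.im))) := by
        fun_prop
      have hEnorm : ∀ z : ℂ,
          ‖Complex.exp (-(Complex.I * ((ζ₁ : ℝ) * z.re + (ζ₂ : ℝ) * z.im)))‖ = 1 := by
        intro z
        rw [Complex.norm_exp]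
        simp
      have hI1 : IntegrableOn (fun z : ℂ =>
          Complex.exp (-(Complex.I * ((ζ₁ : ℝ) * z.re + (ζ₂ : ℝ) * z.im))) * w z)
          (Metric.ball (0 : ℂ) 1) volume := by
        refine hIntOn _ (hEc.measurable.mul hwm) Cw fun z => ?_
        rw [norm_mul, hEnorm, one_mul]
        exact hwb z
      have hI2 : IntegrableOn (fun z : ℂ =>
          Complex.exp (-(Complex.I * ((ζ₁ : ℝ) * z.re + (ζ₂ : ℝ) * z.im))) * w' z)
          (Metric.ball (0 : ℂ) 1) volume := by
        refine hIntOn _ (hEc.measurable.mul hw'm) Cw' fun z => ?_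
        rw [norm_mul, hEnorm, one_mul]
        exact hw'b z
      have hsplit : (∫ z in Metric.ball (0 : ℂ) 1,
          Complex.exp (-(Complex.I * ((ζ₁ : ℝ) * z.re + (ζ₂ : ℝ) * z.im))) * (w z - w' z))
          = (∫ z in Metric.ball (0 : ℂ) 1,
              Complex.exp (-(Complex.I * ((ζ₁ : ℝ) * z.re + (ζ₂ : ℝ) * z.im))) * w z)
            - ∫ z in Metric.ball (0 : ℂ) 1,
              Complex.exp (-(Complex.I * ((ζ₁ : ℝ) * z.re + (ζ₂ : ℝ) * z.im))) * w' z := by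
        rw [← integral_sub hI1 hI2]
        refine integral_congr_ae (Filter.Eventually.of_forall fun z => ?_)
        simp only
        ring
      rw [hsplit, k1, k2, sub_self]
  have hg0 := fourierZero_ae_zero hgInt h0
  have hres : ∀ᵐ x ∂(volume.restrict (Metric.ball (0 : ℂ) 1)), g x = 0 :=
    ae_restrict_of_ae hg0
  filter_upwards [hres, ae_restrict_mem Metric.isOpen_ball.measurableSet] with x hx hmem
  rw [hgdef, Set.indicator_of_mem hmem] at hx
  exact sub_eq_zero.1 hx
end
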